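/- arXiv:2404.11038 — 4 statements merged into one kernel-verified Lean document; each statement's English description precedes it below -/
import Mathlib

section
/- Let F be a field of characteristic 2 and let t^2 + r*t + s and t^2 + r'*t + s' be irreducible polynomials over F with r, r' ≠ 0. If s' - (r'/r)^2 * s ∈ H(r'), then G(r', s') = G(r, s). -/
open Polynomial in
theorem stmt_3 (F : Type*) [Field F] [CharP F 2] (r s r' s' : F)
    (hr : r ≠ 0) (hr' : r' ≠ 0)
    (hirr : Irreducible (X ^ 2 + C r * X + C s : F[X]))
    (hirr' : Irreducible (X ^ 2 + C r' * X + C s' : F[X]))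
    (hH : s' - (r' / r) ^ 2 * s ∈ {y : F | ∃ x : F, y = x ^ 2 + r' * x}) :
    {z : F | ∃ x y : F, (x, y) ≠ (0, 0) ∧ z = x ^ 2 + r' * x * y + s' * y ^ 2} =
      {z : F | ∃ x y : F, (x, y) ≠ (0, 0) ∧ z = x ^ 2 + r * x * y + s * y ^ 2} := by
  obtain ⟨a, ha⟩ := hH
  have h2 : (2 : F) = 0 := by exact_mod_cast CharP.cast_eq_zero F 2
  have hrr : r' / r * r = r' := div_mul_cancel₀ r' hr
  have hrr' : r / r' * r' = r := div_mul_cancel₀ r hr'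
  ext z
  simp only [Set.mem_setOf_eq]
  constructor
  · rintro ⟨x, y, hne, rfl⟩
    refine ⟨x + a * y, r' / r * y, ?_, ?_⟩
    · intro h
      rw [Prod.mk.injEq] at h
      obtain ⟨h1, h2'⟩ := h
      have hy : y = 0 := by
        rcases mul_eq_zero.mp h2' with h' | h'
        · exact absurd h' (div_ne_zero hr' hr)
        · exact h'
      apply hne
      rw [hy, mul_zero, add_zero] at h1
      rw [h1, hy]
    · linear_combination y ^ 2 * ha - a * x * y * h2 - (x * y + a * y ^ 2) * hrr
  · rintro ⟨x, y, hne, rfl⟩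
    refine ⟨x + a * (r / r' * y), r / r' * y, ?_, ?_⟩
    · intro h
      rw [Prod.mk.injEq] at h
      obtain ⟨h1, h2'⟩ := h
      have hy : y = 0 := by
        rcases mul_eq_zero.mp h2' with h' | h'
        · exact absurd h' (div_ne_zero hr hr')
        · exact h'
      apply hne
      rw [hy, mul_zero, mul_zero, add_zero] at h1
      rw [h1, hy]
    · have hdc : (r / r') * (r' / r) = 1 := by field_simp
      linear_combination (-((r / r') ^ 2 * y ^ 2)) * ha - x * y * hrr' -
        a * (r / r') * x * y * h2 - (r / r') ^ 2 * y ^ 2 * a * (r' + a) * h2 - s * y ^ 2 * (1 + (r / r') * (r' / r)) * hdc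
end

section
/- Let F be a field of characteristic 2. On the set of pairs (r,s) ∈ F × F with r ≠ 0 and t^2 + r*t + s irreducible over F, the relation (r', s') ∼ (r, s) defined by r'/r ∈ G(r,s) and s' - (r'/r)^2 * s ∈ H(r') is an equivalence relation (reflexive, symmetric, and transitive). -/
/-!
Writing `c = r' / r`, the relation `(r', s') ∼ (r, s)` says that `r' = c r` and
`s' = c² s + d² + r' d` for some `c ∈ G(r, s)` and `d ∈ F`. In characteristic 2 the substitution
`(x, y) ↦ (x + d y, c y)` turns `x² + r x y + s y²` into `x² + r' x y + s' y²`, so related pairs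
have the same value set `G`. As `G` is closed under products and inverses, the scaling factors `c`
multiply and invert inside `G`, while the translations `d` transform affinely; this gives symmetry
and transitivity.
-/

namespace CharTwoQuadratic

section CommRing

variable {R : Type*} [CommRing R]

def normValues (r s : R) : Set R :=
  {z | ∃ x y : R, (x, y) ≠ (0, 0) ∧ z = x ^ 2 + r * x * y + s * y ^ 2}

def artinSchreierValues (r : R) : Set R :=
  {y | ∃ x : R, y = x ^ 2 + r * x}

theorem one_mem_normValues [Nontrivial R] (r s : R) : (1 : R) ∈ normValues r s :=
  ⟨1, 0, by simp, by ring⟩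

theorem mul_mem_normValues {r s a b : R} (ha : a ∈ normValues r s) (hb : b ∈ normValues r s)
    (hab : a * b ≠ 0) : a * b ∈ normValues r s := by
  obtain ⟨x, y, -, rfl⟩ := ha
  obtain ⟨u, v, -, rfl⟩ := hb
  -- `(x - y θ) (u - v θ) = (x u - s y v) - (x v + y u + r y v) θ` for `θ² + r θ + s = 0`
  have hprod : (x ^ 2 + r * x * y + s * y ^ 2) * (u ^ 2 + r * u * v + s * v ^ 2) =
      (x * u - s * y * v) ^ 2 + r * (x * u - s * y * v) * (x * v + y * u + r * y * v) +
        s * (x * v + y * u + r * y * v) ^ 2 := by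
    ring
  refine ⟨_, _, fun hzero => hab ?_, hprod⟩
  simp only [Prod.mk.injEq] at hzero
  rw [hprod, hzero.1, hzero.2]
  ring

end CommRing

variable {F : Type*} [Field F]

theorem inv_mem_normValues {r s a : F} (ha : a ∈ normValues r s) (ha0 : a ≠ 0) :
    a⁻¹ ∈ normValues r s := by
  obtain ⟨x, y, hxy, hval⟩ := ha
  refine ⟨x / a, y / a, by simpa [ha0] using hxy, ?_⟩
  field_simp
  linear_combination hval

theorem normValues_subset_of_eq [CharP F 2] {r s r' s' c d : F} (hc : c ≠ 0) (hr : r' = c * r)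
    (hs : s' = c ^ 2 * s + d ^ 2 + r' * d) : normValues r' s' ⊆ normValues r s := by
  rintro z ⟨x, y, hxy, rfl⟩
  refine ⟨x + d * y, c * y, fun hzero => hxy ?_, ?_⟩
  · simp only [Prod.mk.injEq, mul_eq_zero, hc, false_or] at hzero ⊢
    obtain ⟨hx, rfl⟩ := hzero
    simpa using hx
  · subst hr hs
    linear_combination (-(x * y * d)) * CharTwo.two_eq_zero (R := F)

theorem normValues_eq_of_eq [CharP F 2] {r s r' s' c d : F} (hc : c ≠ 0) (hr : r' = c * r)
    (hs : s' = c ^ 2 * s + d ^ 2 + r' * d) : normValues r' s' = normValues r s := by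
  refine (normValues_subset_of_eq hc hr hs).antisymm
    (normValues_subset_of_eq (c := c⁻¹) (d := d / c) (inv_ne_zero hc) ?_ ?_)
  · rw [hr, inv_mul_cancel_left₀ hc]
  · subst hr hs
    field_simp
    linear_combination (-(c * d * r + d ^ 2)) * CharTwo.two_eq_zero (R := F)

def QuadRel (p q : F × F) : Prop :=
  p.1 / q.1 ∈ normValues q.1 q.2 ∧ p.2 - (p.1 / q.1) ^ 2 * q.2 ∈ artinSchreierValues p.1

theorem quadRel_iff {r s r' s' : F} (hr : r ≠ 0) :
    QuadRel (r', s') (r, s) ↔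
      ∃ c ∈ normValues r s, ∃ d, r' = c * r ∧ s' = c ^ 2 * s + d ^ 2 + r' * d := by
  constructor
  · rintro ⟨hc, d, hd⟩
    exact ⟨r' / r, hc, d, (div_mul_cancel₀ r' hr).symm, by linear_combination hd⟩
  · rintro ⟨c, hc, d, rfl, hs⟩
    rw [QuadRel, mul_div_cancel_right₀ c hr]
    exact ⟨hc, d, by linear_combination hs⟩

theorem quadRel_refl {r : F} (s : F) (hr : r ≠ 0) : QuadRel (r, s) (r, s) :=
  (quadRel_iff hr).2 ⟨1, one_mem_normValues r s, 0, by ring, by ring⟩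

variable [CharP F 2]

theorem QuadRel.symm {r s r' s' : F} (hr' : r' ≠ 0) (hr : r ≠ 0) (h : QuadRel (r', s') (r, s)) :
    QuadRel (r, s) (r', s') := by
  obtain ⟨c, hc, d, rfl, hs⟩ := (quadRel_iff hr).1 h
  have hc0 : c ≠ 0 := left_ne_zero_of_mul hr'
  refine (quadRel_iff hr').2 ⟨c⁻¹, ?_, d / c, by field_simp, ?_⟩
  · rw [normValues_eq_of_eq hc0 rfl hs]
    exact inv_mem_normValues hc hc0
  · subst hs
    field_simp
    linear_combination (-(c * d * r + d ^ 2)) * CharTwo.two_eq_zero (R := F)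

theorem QuadRel.trans {r₁ s₁ r₂ s₂ r₃ s₃ : F} (hr₁ : r₁ ≠ 0) (hr₂ : r₂ ≠ 0) (hr₃ : r₃ ≠ 0)
    (h₁₂ : QuadRel (r₁, s₁) (r₂, s₂)) (h₂₃ : QuadRel (r₂, s₂) (r₃, s₃)) :
    QuadRel (r₁, s₁) (r₃, s₃) := by
  obtain ⟨c₁, hc₁, d₁, rfl, hs₁⟩ := (quadRel_iff hr₂).1 h₁₂
  obtain ⟨c₂, hc₂, d₂, rfl, hs₂⟩ := (quadRel_iff hr₃).1 h₂₃
  rw [normValues_eq_of_eq (left_ne_zero_of_mul hr₂) rfl hs₂] at hc₁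
  refine (quadRel_iff hr₃).2 ⟨c₁ * c₂, mul_mem_normValues hc₁ hc₂ ?_, c₁ * d₂ + d₁, by ring, ?_⟩
  · rw [← mul_assoc] at hr₁
    exact left_ne_zero_of_mul hr₁
  · rw [hs₁, hs₂]
    linear_combination (-(c₁ * d₁ * d₂)) * CharTwo.two_eq_zero (R := F)

end CharTwoQuadratic

open CharTwoQuadratic

open Polynomial in
theorem stmt_4 (F : Type*) [Field F] [CharP F 2] :
    Equivalence (fun p q : {p : F × F // p.1 ≠ 0 ∧ Irreducible (X ^ 2 + C p.1 * X + C p.2 : F[X])} =>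
      p.1.1 / q.1.1 ∈
          {z : F | ∃ x y : F, (x, y) ≠ (0, 0) ∧ z = x ^ 2 + q.1.1 * x * y + q.1.2 * y ^ 2} ∧
        p.1.2 - (p.1.1 / q.1.1) ^ 2 * q.1.2 ∈ {y : F | ∃ x : F, y = x ^ 2 + p.1.1 * x}) :=
  ⟨fun p => quadRel_refl p.1.2 p.2.1, fun {p q} h => QuadRel.symm p.2.1 q.2.1 h,
    fun {p q u} h₁₂ h₂₃ => QuadRel.trans p.2.1 q.2.1 u.2.1 h₁₂ h₂₃⟩
end

section
/- Let L be a symplectic alternating algebra with lower central series L^1 = L, L^(k+1) = L^k · L, and upper central series Z_0 = 0, Z_{k+1} = {x : x·L ⊆ Z_k}. Then Z_k(L) = (L^{k+1})⊥ for all k ≥ 0. -/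
/-- A symplectic alternating algebra: a vector space with a non-degenerate
alternating bilinear form and an alternating bilinear product satisfying
`(x·y, z) = (y·z, x)`. -/
structure SAA (F : Type*) [Field F] (L : Type*) [AddCommGroup L] [Module F L] where
  form : L →ₗ[F] L →ₗ[F] F
  mul : L →ₗ[F] L →ₗ[F] L
  form_alt : ∀ x : L, form x x = 0
  form_nondeg : ∀ x : L, (∀ y : L, form x y = 0) → x = 0
  mul_alt : ∀ x : L, mul x x = 0
  invar : ∀ x y z : L, form (mul x y) z = form (mul y z) x

theorem stmt_14 (F : Type*) [Field F] (L : Type*) [AddCommGroup L] [Module F L]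
    [FiniteDimensional F L] (S : SAA F L)
    (C : ℕ → Submodule F L) (Z : ℕ → Submodule F L)
    (hC1 : C 1 = ⊤)
    (hCsucc : ∀ k, C (k + 1) = Submodule.span F {z : L | ∃ u ∈ C k, ∃ v : L, z = S.mul u v})
    (hZ0 : Z 0 = ⊥)
    (hZsucc : ∀ k, ∀ x : L, x ∈ Z (k + 1) ↔ ∀ y : L, S.mul x y ∈ Z k) :
    ∀ k : ℕ, (Z k : Set L) = {x : L | ∀ a ∈ C (k + 1), S.form x a = 0} := by
  have form_skew : ∀ x y : L, S.form x y = - S.form y x := by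
    intro x y
    have h := S.form_alt (x + y)
    simp only [map_add, LinearMap.add_apply, S.form_alt x, S.form_alt y] at h
    linear_combination h
  have mul_skew : ∀ x y : L, S.mul x y = - S.mul y x := by
    intro x y
    have h := S.mul_alt (x + y)
    simp only [map_add, LinearMap.add_apply, S.mul_alt x, S.mul_alt y] at h
    rw [eq_neg_iff_add_eq_zero]
    linear_combination (norm := abel) h
  have key : ∀ x u v : L, S.form x (S.mul u v) = S.form (S.mul x v) u := by
    intro x u v
    rw [form_skew, S.invar u v x, mul_skew v x, map_neg, LinearMap.neg_apply, neg_neg]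
  intro k
  induction k with
  | zero =>
    ext x
    simp only [SetLike.mem_coe, hZ0, Submodule.mem_bot, Set.mem_setOf_eq, hC1,
      Submodule.mem_top, forall_true_left, true_implies]
    constructor
    · rintro rfl a; simp
    · intro h; exact S.form_nondeg x h
  | succ k ih =>
    ext x
    simp only [SetLike.mem_coe, Set.mem_setOf_eq, hZsucc k x]
    have memZ : ∀ w : L, w ∈ Z k ↔ ∀ a ∈ C (k + 1), S.form w a = 0 := by
      intro w
      have := Set.ext_iff.mp ih w
      simpa using this
    constructor
    · intro h a ha
      rw [hCsucc (k + 1)] at ha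
      have hle : Submodule.span F {z : L | ∃ u ∈ C (k + 1), ∃ v : L, z = S.mul u v}
          ≤ LinearMap.ker (S.form x) := by
        rw [Submodule.span_le]
        rintro z ⟨u, hu, v, rfl⟩
        simp only [SetLike.mem_coe, LinearMap.mem_ker]
        rw [key]
        exact (memZ (S.mul x v)).mp (h v) u hu
      exact hle ha
    · intro h y
      rw [memZ]
      intro a ha
      have hmem : S.mul a y ∈ C (k + 2) := by
        rw [hCsucc (k + 1)]
        exact Submodule.subset_span ⟨a, ha, y, rfl⟩
      have := h (S.mul a y) hmem
      rw [key x a y] at this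
      exact this
end

section
/- Let F be a field in which every element has a cube root (e.g. F algebraically closed, or F = ℝ). Let L and L' be 10-dimensional symplectic alternating algebras given on standard bases by presentations P(r): (x_2 y_4, y_5) = r, (x_1 y_2, y_4) = 1, (y_1 y_2, y_5) = 1, (y_1 y_3, y_5) = 1 and P(s) respectively, with r, s ∈ F*. Then L ≅ L'. More precisely, if s/r = b^3 for b ∈ F*, then the map sending x_1 ↦ x_1, y_1 ↦ y_1, x_2 ↦ b x_2, y_2 ↦ (1/b) y_2, x_3 ↦ b x_3, y_3 ↦ (1/b) y_3, x_4 ↦ (1/b) x_4, y_4 ↦ b y_4, x_5 ↦ (1/b) x_5, y_5 ↦ b y_5 transforms the presentation P(r) into P(s). -/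
/-- The presentation `P₁₀^{(3,6)}(r)` on a standard basis `x 0,…,x 4, y 0,…,y 4`
(indices shifted down by one from the paper): the nonzero triple values are
`(x₂y₄,y₅) = r`, `(x₁y₂,y₄) = 1`, `(y₁y₂,y₅) = 1`, `(y₁y₃,y₅) = 1`. -/
def IsPres36 {F : Type*} [Field F] {L : Type*} [AddCommGroup L] [Module F L]
    (S : SAA F L) (x y : Fin 5 → L) (r : F) : Prop :=
  (∀ i j, S.form (x i) (x j) = 0) ∧
  (∀ i j, S.form (y i) (y j) = 0) ∧
  (∀ i j, S.form (x i) (y j) = if i = j then 1 else 0) ∧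
  Submodule.span F (Set.range x ∪ Set.range y) = ⊤ ∧
  S.form (S.mul (x 1) (y 3)) (y 4) = r ∧
  S.form (S.mul (x 0) (y 1)) (y 3) = 1 ∧
  S.form (S.mul (y 0) (y 1)) (y 4) = 1 ∧
  S.form (S.mul (y 0) (y 2)) (y 4) = 1 ∧
  (∀ u ∈ Set.range x ∪ Set.range y, ∀ v ∈ Set.range x ∪ Set.range y,
    ∀ w ∈ Set.range x ∪ Set.range y,
      ({u, v, w} : Set L) ≠ {x 1, y 3, y 4} →
      ({u, v, w} : Set L) ≠ {x 0, y 1, y 3} →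
      ({u, v, w} : Set L) ≠ {y 0, y 1, y 4} →
      ({u, v, w} : Set L) ≠ {y 0, y 2, y 4} →
        S.form (S.mul u v) w = 0)

/-
The rescaling `x₂, x₃, y₄, y₅ ↦ b •`, `y₂, y₃, x₄, x₅ ↦ b⁻¹ •` keeps the basis standard,
multiplies the triple `(x₂y₄, y₅)` by `b³` and fixes the other three, so with `b³ = s / r` the
algebra `L` also has the presentation `P(s)`. Two symplectic alternating algebras with the same
presentation are isomorphic via the linear map matching the bases: an alternating function of
three indices is determined by its values on one ordering of each support set, so all triple
values `(uv, w)` on the bases agree, and by non-degeneracy of the form they determine the products.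
-/

open Function

section Triples

variable {α β : Type*} {f : α → β} {a b c p q w : α}

lemma Set.insert_triple_eq_of_eq (h : ({a, b, c} : Set α) = {p, q, w}) :
    ({f a, f b, f c} : Set β) = {f p, f q, f w} := by
  simpa only [Set.image_insert_eq, Set.image_singleton] using congrArg (f '' ·) h

lemma Function.Injective.eq_of_insert_triple_eq (hf : Injective f)
    (h : ({f a, f b, f c} : Set β) = {f p, f q, f w}) : ({a, b, c} : Set α) = {p, q, w} :=
  hf.image_injective (by simpa only [Set.image_insert_eq, Set.image_singleton] using h)

end Triples

section Alternating

variable {ι R : Type*} [Ring R]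

-- `self_left` does not follow from `swap` in characteristic `2`.
structure IsAlternating3 (T : ι → ι → ι → R) : Prop where
  cyclic : ∀ a b c, T a b c = T b c a
  swap : ∀ a b c, T a b c = -T b a c
  self_left : ∀ a c, T a a c = 0

namespace IsAlternating3

variable {T T' : ι → ι → ι → R}

lemma eq_of_insert_eq (hT : IsAlternating3 T) (hT' : IsAlternating3 T') {a b c p q w : ι}
    (h : ({a, b, c} : Set ι) = {p, q, w}) (hpqw : T p q w = T' p q w) :
    T a b c = T' a b c := by
  by_cases hab : a = b
  · subst hab; rw [hT.self_left, hT'.self_left]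
  by_cases hbc : b = c
  · subst hbc; rw [hT.cyclic, hT.self_left, hT'.cyclic, hT'.self_left]
  by_cases hac : a = c
  · subst hac; rw [hT.cyclic, hT.cyclic, hT.self_left, hT'.cyclic, hT'.cyclic, hT'.self_left]
  have rotate : ∀ a b c, T a b c = T' a b c → T b c a = T' b c a := fun a b c h ↦ by
    rwa [← hT.cyclic, ← hT'.cyclic]
  have swap : ∀ a b c, T a b c = T' a b c → T b a c = T' b a c := fun a b c h ↦ by
    rw [hT.swap, hT'.swap, h]
  have hp : p ∈ ({a, b, c} : Set ι) := h ▸ by simp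
  have hq : q ∈ ({a, b, c} : Set ι) := h ▸ by simp
  have hw : w ∈ ({a, b, c} : Set ι) := h ▸ by simp
  have ha : a ∈ ({p, q, w} : Set ι) := h ▸ by simp
  have hb : b ∈ ({p, q, w} : Set ι) := h ▸ by simp
  have hc : c ∈ ({p, q, w} : Set ι) := h ▸ by simp
  simp only [Set.mem_insert_iff, Set.mem_singleton_iff] at hp hq hw ha hb hc
  -- `(p, q, w)` is a permutation of `(a, b, c)`, and every permutation of three letters is a word
  -- of length at most two in `rotate` and `swap`; the remaining cases contradict distinctness.
  rcases hp with rfl | rfl | rfl <;> rcases hq with rfl | rfl | rfl <;>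
    rcases hw with rfl | rfl | rfl <;>
    first
    | exact hpqw
    | exact rotate _ _ _ hpqw
    | exact rotate _ _ _ (rotate _ _ _ hpqw)
    | exact swap _ _ _ hpqw
    | exact rotate _ _ _ (swap _ _ _ hpqw)
    | exact swap _ _ _ (rotate _ _ _ hpqw)
    | grind

end IsAlternating3

end Alternating

lemma LinearMap.linearIndependent_of_biorthogonal {ι R M N : Type*} [CommRing R]
    [AddCommGroup M] [Module R M] [AddCommGroup N] [Module R N] [DecidableEq ι]
    (B : M →ₗ[R] N →ₗ[R] R) {e : ι → M} {d : ι → N}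
    (h : ∀ a b, B (e a) (d b) = if a = b then 1 else 0) : LinearIndependent R e := by
  rw [linearIndependent_iff']
  intro s g hg i hi
  simpa [h, Finset.sum_ite_eq', hi] using congrArg (fun z ↦ B z (d i)) hg

namespace SAA

variable {F : Type*} [Field F] {L : Type*} [AddCommGroup L] [Module F L] (S : SAA F L)

lemma form_swap (u v : L) : S.form u v = -S.form v u :=
  (LinearMap.IsAlt.neg S.form_alt v u).symm

lemma isAlternating3_triple {ι : Type*} (e : ι → L) :
    IsAlternating3 fun a b c ↦ S.form (S.mul (e a) (e b)) (e c) where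
  cyclic a b c := S.invar _ _ _
  swap a b c := by rw [← LinearMap.IsAlt.neg S.mul_alt, map_neg, LinearMap.neg_apply]
  self_left a c := by rw [S.mul_alt, map_zero, LinearMap.zero_apply]

lemma eq_of_form_basis {ι : Type*} (e : Module.Basis ι F L) {u v : L}
    (h : ∀ c, S.form u (e c) = S.form v (e c)) : u = v := by
  refine sub_eq_zero.mp (S.form_nondeg _ fun z ↦ ?_)
  rw [map_sub, e.ext h, sub_self, LinearMap.zero_apply]

variable {S} {L' : Type*} [AddCommGroup L'] [Module F L'] {S' : SAA F L'}

lemma exists_iso_of_basis {ι : Type*} (e : Module.Basis ι F L) (e' : Module.Basis ι F L')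
    (hform : ∀ a b, S'.form (e' a) (e' b) = S.form (e a) (e b))
    (htriple : ∀ a b c,
      S'.form (S'.mul (e' a) (e' b)) (e' c) = S.form (S.mul (e a) (e b)) (e c)) :
    ∃ φ : L ≃ₗ[F] L', (∀ u v, S'.form (φ u) (φ v) = S.form u v) ∧
      (∀ u v, φ (S.mul u v) = S'.mul (φ u) (φ v)) := by
  set φ := e.equiv e' (Equiv.refl ι)
  have hφ (a : ι) : φ (e a) = e' a := e.equiv_apply a e' _
  have hφ_form (u v : L) : S'.form (φ u) (φ v) = S.form u v :=
    LinearMap.congr_fun₂ (LinearMap.ext_basis (B := S'.form.compl₁₂ (φ : L →ₗ[F] L') φ) e e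
      fun a b ↦ by simp [hφ, hform]) u v
  have hφ_mul_basis (a b : ι) : φ (S.mul (e a) (e b)) = S'.mul (e' a) (e' b) :=
    S'.eq_of_form_basis e' fun c ↦ by rw [← hφ c, hφ_form, hφ, htriple]
  have hφ_mul : S.mul.compr₂ (φ : L →ₗ[F] L') = S'.mul.compl₁₂ (φ : L →ₗ[F] L') φ :=
    LinearMap.ext_basis e e fun a b ↦ by simp [hφ, hφ_mul_basis]
  exact ⟨φ, hφ_form, LinearMap.congr_fun₂ hφ_mul⟩

end SAA

namespace IsPres36

variable {F : Type*} [Field F] {L : Type*} [AddCommGroup L] [Module F L]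
  {S : SAA F L} {x y : Fin 5 → L} {r : F}
  {L' : Type*} [AddCommGroup L'] [Module F L'] {S' : SAA F L'} {x' y' : Fin 5 → L'}

lemma linearIndependent (h : IsPres36 S x y r) : LinearIndependent F (Sum.elim x y) := by
  obtain ⟨hxx, hyy, hxy, -⟩ := h
  refine S.form.linearIndependent_of_biorthogonal (d := Sum.elim y (-x)) fun a b ↦ ?_
  rcases a with i | i <;> rcases b with j | j
  · simp [hxy]
  · simp [hxx]
  · simp [hyy]
  · simp [S.form_swap (y i), hxy, eq_comm]

noncomputable def basis (h : IsPres36 S x y r) : Module.Basis (Fin 5 ⊕ Fin 5) F L :=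
  .mk h.linearIndependent (by rw [Set.Sum.elim_range, h.2.2.2.1])

lemma coe_basis (h : IsPres36 S x y r) : ⇑h.basis = Sum.elim x y :=
  Module.Basis.coe_mk _ _

lemma form_eq {r' : F} (h : IsPres36 S x y r) (h' : IsPres36 S' x' y' r') (a b : Fin 5 ⊕ Fin 5) :
    S'.form (Sum.elim x' y' a) (Sum.elim x' y' b) = S.form (Sum.elim x y a) (Sum.elim x y b) := by
  obtain ⟨hxx, hyy, hxy, -⟩ := h
  obtain ⟨hxx', hyy', hxy', -⟩ := h'
  rcases a with i | i <;> rcases b with j | j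
  · simp [hxx, hxx']
  · simp [hxy, hxy']
  · simp [S.form_swap (y i), S'.form_swap (y' i), hxy, hxy']
  · simp [hyy, hyy']

lemma triple_eq_zero (h : IsPres36 S x y r) {a b c : Fin 5 ⊕ Fin 5}
    (h₁ : ({a, b, c} : Set (Fin 5 ⊕ Fin 5)) ≠ {.inl 1, .inr 3, .inr 4})
    (h₂ : ({a, b, c} : Set (Fin 5 ⊕ Fin 5)) ≠ {.inl 0, .inr 1, .inr 3})
    (h₃ : ({a, b, c} : Set (Fin 5 ⊕ Fin 5)) ≠ {.inr 0, .inr 1, .inr 4})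
    (h₄ : ({a, b, c} : Set (Fin 5 ⊕ Fin 5)) ≠ {.inr 0, .inr 2, .inr 4}) :
    S.form (S.mul (Sum.elim x y a) (Sum.elim x y b)) (Sum.elim x y c) = 0 := by
  have hmem (a : Fin 5 ⊕ Fin 5) : Sum.elim x y a ∈ Set.range x ∪ Set.range y :=
    Set.Sum.elim_range x y ▸ Set.mem_range_self a
  have hinj := h.linearIndependent.injective
  obtain ⟨-, -, -, -, -, -, -, -, hvanish⟩ := h
  exact hvanish _ (hmem a) _ (hmem b) _ (hmem c)
    (fun heq ↦ h₁ (hinj.eq_of_insert_triple_eq heq))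
    (fun heq ↦ h₂ (hinj.eq_of_insert_triple_eq heq))
    (fun heq ↦ h₃ (hinj.eq_of_insert_triple_eq heq))
    (fun heq ↦ h₄ (hinj.eq_of_insert_triple_eq heq))

lemma triple_eq (h : IsPres36 S x y r) (h' : IsPres36 S' x' y' r) (a b c : Fin 5 ⊕ Fin 5) :
    S'.form (S'.mul (Sum.elim x' y' a) (Sum.elim x' y' b)) (Sum.elim x' y' c) =
      S.form (S.mul (Sum.elim x y a) (Sum.elim x y b)) (Sum.elim x y c) := by
  have ⟨_, _, _, _, g₁, g₂, g₃, g₄, _⟩ := h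
  have ⟨_, _, _, _, g₁', g₂', g₃', g₄', _⟩ := h'
  have hT := S.isAlternating3_triple (Sum.elim x y)
  have hT' := S'.isAlternating3_triple (Sum.elim x' y')
  by_cases h₁ : ({a, b, c} : Set (Fin 5 ⊕ Fin 5)) = {.inl 1, .inr 3, .inr 4}
  · exact hT'.eq_of_insert_eq hT h₁ (g₁'.trans g₁.symm)
  by_cases h₂ : ({a, b, c} : Set (Fin 5 ⊕ Fin 5)) = {.inl 0, .inr 1, .inr 3}
  · exact hT'.eq_of_insert_eq hT h₂ (g₂'.trans g₂.symm)
  by_cases h₃ : ({a, b, c} : Set (Fin 5 ⊕ Fin 5)) = {.inr 0, .inr 1, .inr 4}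
  · exact hT'.eq_of_insert_eq hT h₃ (g₃'.trans g₃.symm)
  by_cases h₄ : ({a, b, c} : Set (Fin 5 ⊕ Fin 5)) = {.inr 0, .inr 2, .inr 4}
  · exact hT'.eq_of_insert_eq hT h₄ (g₄'.trans g₄.symm)
  rw [h.triple_eq_zero h₁ h₂ h₃ h₄, h'.triple_eq_zero h₁ h₂ h₃ h₄]

lemma exists_iso (h : IsPres36 S x y r) (h' : IsPres36 S' x' y' r) :
    ∃ φ : L ≃ₗ[F] L', (∀ u v, S'.form (φ u) (φ v) = S.form u v) ∧
      (∀ u v, φ (S.mul u v) = S'.mul (φ u) (φ v)) :=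
  SAA.exists_iso_of_basis h.basis h'.basis (by simpa only [coe_basis] using h.form_eq h')
    (by simpa only [coe_basis] using h.triple_eq h')

lemma smul (h : IsPres36 S x y r) {cx cy : Fin 5 → F} (hc : ∀ i, cx i * cy i = 1)
    (h₂ : cx 0 * cy 1 * cy 3 = 1) (h₃ : cy 0 * cy 1 * cy 4 = 1) (h₄ : cy 0 * cy 2 * cy 4 = 1) :
    IsPres36 S (cx • x) (cy • y) (cx 1 * cy 3 * cy 4 * r) := by
  have ⟨hxx, hyy, hxy, hspan, g₁, g₂, g₃, g₄, _⟩ := h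
  refine ⟨fun i j ↦ by simp [hxx], fun i j ↦ by simp [hyy], fun i j ↦ ?_, ?_,
    by simp [g₁]; ring, by simp [g₂]; linear_combination h₂, by simp [g₃]; linear_combination h₃,
    by simp [g₄]; linear_combination h₄, ?_⟩
  · rcases eq_or_ne i j with rfl | hij
    · simpa [hxy, mul_comm] using hc i
    · simp [hxy, hij]
  · rw [eq_top_iff, ← hspan, Submodule.span_le]
    rintro _ (⟨i, rfl⟩ | ⟨i, rfl⟩)
    · have : x i = cy i • (cx • x) i := by rw [Pi.smul_apply', smul_smul, mul_comm, hc, one_smul]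
      rw [this]
      exact Submodule.smul_mem _ _ (Submodule.subset_span (.inl ⟨i, rfl⟩))
    · have : y i = cx i • (cy • y) i := by rw [Pi.smul_apply', smul_smul, hc, one_smul]
      rw [this]
      exact Submodule.smul_mem _ _ (Submodule.subset_span (.inr ⟨i, rfl⟩))
  · intro u hu v hv w hw n₁ n₂ n₃ n₄
    rw [← Set.Sum.elim_range] at hu hv hw
    obtain ⟨a, rfl⟩ := hu
    obtain ⟨b, rfl⟩ := hv
    obtain ⟨c, rfl⟩ := hw
    have hzero := h.triple_eq_zero (fun hidx ↦ n₁ (Set.insert_triple_eq_of_eq hidx))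
      (fun hidx ↦ n₂ (Set.insert_triple_eq_of_eq hidx))
      (fun hidx ↦ n₃ (Set.insert_triple_eq_of_eq hidx))
      (fun hidx ↦ n₄ (Set.insert_triple_eq_of_eq hidx))
    have he : Sum.elim (cx • x) (cy • y) = Sum.elim cx cy • Sum.elim x y := by
      ext (i | i) <;> rfl
    simp [he, hzero]

lemma rescale (h : IsPres36 S x y r) {b : F} (hb : b ≠ 0) :
    IsPres36 S ![x 0, b • x 1, b • x 2, b⁻¹ • x 3, b⁻¹ • x 4]
      ![y 0, b⁻¹ • y 1, b⁻¹ • y 2, b • y 3, b • y 4] (r * b ^ 3) := by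
  have hx : ![x 0, b • x 1, b • x 2, b⁻¹ • x 3, b⁻¹ • x 4] = ![1, b, b, b⁻¹, b⁻¹] • x := by
    ext i; fin_cases i <;> simp
  have hy : ![y 0, b⁻¹ • y 1, b⁻¹ • y 2, b • y 3, b • y 4] = ![1, b⁻¹, b⁻¹, b, b] • y := by
    ext i; fin_cases i <;> simp
  rw [hx, hy, show r * b ^ 3 = b * b * b * r by ring]
  exact h.smul (fun i ↦ by fin_cases i <;> simp [hb]) (by simp [hb]) (by simp [hb])
    (by simp [hb])

end IsPres36

theorem stmt_18_general (F : Type*) [Field F] (hcube : ∀ c : F, ∃ b : F, b ^ 3 = c)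
    (L : Type*) [AddCommGroup L] [Module F L]
    (L' : Type*) [AddCommGroup L'] [Module F L']
    (S : SAA F L) (S' : SAA F L') (r s : F) (hr : r ≠ 0) (hs : s ≠ 0)
    (x y : Fin 5 → L) (hP : IsPres36 S x y r)
    (x' y' : Fin 5 → L') (hP' : IsPres36 S' x' y' s) :
    (∃ φ : L ≃ₗ[F] L',
      (∀ a b : L, S'.form (φ a) (φ b) = S.form a b) ∧
      (∀ a b : L, φ (S.mul a b) = S'.mul (φ a) (φ b))) ∧
    (∀ b : F, b ≠ 0 → s = r * b ^ 3 →
      IsPres36 S ![x 0, b • x 1, b • x 2, b⁻¹ • x 3, b⁻¹ • x 4]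
        ![y 0, b⁻¹ • y 1, b⁻¹ • y 2, b • y 3, b • y 4] s) := by
  have rescale (b : F) (hb : b ≠ 0) (hsb : s = r * b ^ 3) :
      IsPres36 S ![x 0, b • x 1, b • x 2, b⁻¹ • x 3, b⁻¹ • x 4]
        ![y 0, b⁻¹ • y 1, b⁻¹ • y 2, b • y 3, b • y 4] s :=
    hsb ▸ hP.rescale hb
  obtain ⟨b, hb⟩ := hcube (s / r)
  have hb₀ : b ≠ 0 := by
    rintro rfl
    exact div_ne_zero hs hr (by simpa using hb.symm)
  exact ⟨(rescale b hb₀ (by rw [hb]; field_simp)).exists_iso hP', rescale⟩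

theorem stmt_18 (F : Type*) [Field F] (hcube : ∀ c : F, ∃ b : F, b ^ 3 = c)
    (L : Type*) [AddCommGroup L] [Module F L] [FiniteDimensional F L]
    (L' : Type*) [AddCommGroup L'] [Module F L'] [FiniteDimensional F L']
    (S : SAA F L) (S' : SAA F L') (r s : F) (hr : r ≠ 0) (hs : s ≠ 0)
    (x y : Fin 5 → L) (hP : IsPres36 S x y r)
    (x' y' : Fin 5 → L') (hP' : IsPres36 S' x' y' s) :
    (∃ φ : L ≃ₗ[F] L',
      (∀ a b : L, S'.form (φ a) (φ b) = S.form a b) ∧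
      (∀ a b : L, φ (S.mul a b) = S'.mul (φ a) (φ b))) ∧
    (∀ b : F, b ≠ 0 → s = r * b ^ 3 →
      IsPres36 S ![x 0, b • x 1, b • x 2, b⁻¹ • x 3, b⁻¹ • x 4]
        ![y 0, b⁻¹ • y 1, b⁻¹ • y 2, b • y 3, b • y 4] s) :=
  stmt_18_general F hcube L L' S S' r s hr hs x y hP x' y' hP'
end
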